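/- Let q be a prime power and α = (α₀,...,αₙ) ∈ F_q^{n+1} with rank H_{n₁,n₂}(α) = r = ρ₁ + π₁, ρ(α) = ρ₁, π(α) = π₁ ≥ 1, and 0 ≤ r ≤ n₁ - 1. Then for every value of α_{n+1} ∈ F_q, the extension α' = (α₀,...,αₙ,α_{n+1}) satisfies ρ(α') = ρ₁ and π(α') = π₁ + 1 (so the rank of the extended near-square Hankel matrix is r+1). The first characteristic polynomial is unchanged, A₁' = A₁, and A₂' = βT^{c₂-c₁}A₁ + A₂ for some β ∈ F_q, with c₁ = r, c₂ = n+2-r, where α_{n+1} ↔ β is a bijection. -/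

import Mathlib

open Matrix Polynomial

/-- The `l × m` Hankel matrix whose `(i,j)` entry (zero-indexed) is `α (i + j)`. -/
def hankel (F : Type) [Field F] (l m : ℕ) (α : ℕ → F) : Matrix (Fin l) (Fin m) F :=
  Matrix.of fun i j => α (i.1 + j.1)

/-- `ρ(α)`: the largest `l ≤ n₁ = (n+2)/2` such that the top-left `l × l` Hankel matrix
of `α` is invertible (`0` if none exists). -/
noncomputable def rhoC (F : Type) [Field F] (n : ℕ) (α : ℕ → F) : ℕ :=
  sSup {l | l ≤ (n + 2) / 2 ∧ (hankel F l l α).det ≠ 0}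

/-- `π(α) = rank H_{n₁,n₂}(α) - ρ(α)`. -/
noncomputable def piC (F : Type) [Field F] (n : ℕ) (α : ℕ → F) : ℕ :=
  (hankel F ((n + 2) / 2) ((n + 3) / 2) α).rank - rhoC F n α

/-- `deg B ≤ k` for an integer bound `k` (so `k < 0` forces `B = 0`). -/
def degLE (F : Type) [Field F] (B : Polynomial F) (k : ℤ) : Prop :=
  ∀ i : ℕ, k < (i : ℤ) → B.coeff i = 0

/-- `A₁, A₂` are characteristic polynomials for the sequence `α` (of length `n+1`) with
first characteristic degree `c₁ = r` and second characteristic degree `c₂ = n+2-r`: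
the kernels of all the Hankel matrices `H_{l,m}(α)`, `l+m-2 = n`, consist exactly of the
(coefficient vectors of) polynomials `B₁A₁ + B₂A₂` with `deg B₁ ≤ m - c₁ - 1` and
`deg B₂ ≤ m - c₂ - 1`. -/
def IsCharSeq (F : Type) [Field F] (n r : ℕ) (A₁ A₂ : Polynomial F) (α : ℕ → F) : Prop :=
  ∀ l m : ℕ, 1 ≤ l → 1 ≤ m → l + m = n + 2 →
    {v : Fin m → F | (hankel F l m α).mulVec v = 0} =
    {v : Fin m → F | ∃ B₁ B₂ : Polynomial F,
      degLE F B₁ ((m : ℤ) - r - 1) ∧ degLE F B₂ ((m : ℤ) - ((n : ℤ) + 2 - r) - 1) ∧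
      v = fun i : Fin m => (B₁ * A₁ + B₂ * A₂).coeff (i : ℕ)}

/-- A sequence `α ∈ F^{n+1}` viewed as a function `ℕ → F` (zero beyond index `n`). -/
def extSeq (F : Type) [Field F] (n : ℕ) (α : Fin (n + 1) → F) : ℕ → F :=
  fun i => if h : i < n + 1 then α ⟨i, h⟩ else 0

/-- The extension of a sequence of length `n+1` by a new entry `c` at index `n+1`. -/
def extendSeq (F : Type) [Field F] (n : ℕ) (α : ℕ → F) (c : F) : ℕ → F :=
  fun i => if i = n + 1 then c else α i

/-!
The pairing `hankelApply γ k P = ∑ⱼ γ (k + j) Pⱼ` turns the kernels of Hankel matrices into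
conditions on polynomials: `P` of degree `< m` lies in the kernel of `H_{l,m}(γ)` iff its
pairings at the shifts `k < l` vanish. For the characteristic polynomials of `α`, `A₁` is
annihilated at all shifts `k ≤ n - r` and `A₂` at all shifts `k ≤ r - 2`, while the pairing of
`A₁` at shift `n + 1 - r` is nonzero (otherwise `X ^ (n + 2 - 2r) A₁` would be a kernel element of
`H_{r,n+2-r}(α)` of too low a degree). Appending `α_{n+1} = c` changes only the pairing of `A₂`
at shift `r - 1`, by `c` times its leading coefficient, an affine bijection of `c`; taking `β` so
that `β X ^ (c₂ - c₁) A₁` cancels it makes `A₂' = β X ^ (c₂ - c₁) A₁ + A₂` annihilated at all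
shifts `≤ r - 1`, which yields the kernel description of the extension with degrees `r + 1` and
`n + 2 - r`. In the near-square matrix of the extension this kernel consists of multiples of `A₁`
only, which gives the rank `r + 1`; and `A₁` lies in the kernel of the new square matrix (`n`
odd), so `ρ` does not grow.
-/

section DegreeBound

variable {F : Type} [Field F] {P Q : F[X]} {k k' : ℤ}

theorem degLE.mono (h : degLE F P k) (hk : k ≤ k') : degLE F P k' :=
  fun i hi => h i (hk.trans_lt hi)

theorem degLE.eq_zero (h : degLE F P k) (hk : k < 0) : P = 0 :=
  Polynomial.ext fun i => h i (by omega)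

theorem degLE.add (hP : degLE F P k) (hQ : degLE F Q k) : degLE F (P + Q) k :=
  fun i hi => by rw [coeff_add, hP i hi, hQ i hi, add_zero]

theorem degLE.sub (hP : degLE F P k) (hQ : degLE F Q k) : degLE F (P - Q) k :=
  fun i hi => by rw [coeff_sub, hP i hi, hQ i hi, sub_zero]

theorem degLE.mul (hP : degLE F P k) (hQ : degLE F Q k') : degLE F (P * Q) (k + k') := by
  intro i hi
  rw [coeff_mul]
  refine Finset.sum_eq_zero fun x hx => ?_
  rw [Finset.HasAntidiagonal.mem_antidiagonal] at hx
  rcases le_or_gt (x.1 : ℤ) k with h | h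
  · rw [hQ x.2 (by omega), mul_zero]
  · rw [hP x.1 h, zero_mul]

theorem degLE.of_coeff_eq_zero (h : degLE F P k) (hk : ∀ i : ℕ, (i : ℤ) = k → P.coeff i = 0) :
    degLE F P (k - 1) := fun i hi =>
  (eq_or_lt_of_le (show k ≤ i by omega)).elim (fun h' => hk i h'.symm) (h i)

theorem degLE.natDegree_le {d : ℕ} (h : degLE F P d) : P.natDegree ≤ d :=
  natDegree_le_iff_coeff_eq_zero.2 fun i hi => h i (by omega)

theorem degLE_natDegree (P : F[X]) : degLE F P P.natDegree :=
  fun _ hi => coeff_eq_zero_of_natDegree_lt (by omega)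

theorem degLE_C (a : F) : degLE F (C a) 0 :=
  fun i hi => by rw [coeff_C, if_neg (by omega)]

theorem degLE_X_pow (e : ℕ) : degLE F (X ^ e) e :=
  fun i hi => by rw [coeff_X_pow, if_neg (by omega)]

theorem mem_degreeLT_iff_degLE {d : ℕ} : P ∈ degreeLT F d ↔ degLE F P (d - 1) := by
  rw [mem_degreeLT, degree_lt_iff_coeff_zero]
  exact ⟨fun h i hi => h i (by omega), fun h i hi => h i (by omega)⟩

theorem coeff_fin_eq_iff {m : ℕ} (hP : degLE F P (m - 1)) (hQ : degLE F Q (m - 1)) :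
    (fun j : Fin m => P.coeff j) = (fun j : Fin m => Q.coeff j) ↔ P = Q := by
  refine ⟨fun h => Polynomial.ext fun j => ?_, fun h => h ▸ rfl⟩
  rcases lt_or_ge j m with hj | hj
  · exact congrFun h ⟨j, hj⟩
  · rw [hP j (by omega), hQ j (by omega)]

theorem exists_degLE_coeff_fin_eq {m : ℕ} (v : Fin m → F) :
    ∃ P : F[X], degLE F P (m - 1) ∧ (fun j : Fin m => P.coeff j) = v :=
  ⟨_, mem_degreeLT_iff_degLE.1 ((degreeLTEquiv F m).symm v).2,
    (degreeLTEquiv F m).apply_symm_apply v⟩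

end DegreeBound

section HankelApply

variable {F : Type} [Field F]

noncomputable def hankelApply (γ : ℕ → F) (k : ℕ) (P : F[X]) : F :=
  P.sum fun j a => γ (k + j) * a

variable {γ : ℕ → F} {k : ℕ} {P Q B : F[X]}

theorem hankelApply_eq_sum_range {N : ℕ} (hP : P.natDegree < N) :
    hankelApply γ k P = ∑ j ∈ Finset.range N, γ (k + j) * P.coeff j :=
  sum_over_range' P (fun _ => mul_zero _) N hP

theorem hankelApply_add : hankelApply γ k (P + Q) = hankelApply γ k P + hankelApply γ k Q :=
  sum_add_index P Q _ (fun _ => mul_zero _) fun _ _ _ => mul_add _ _ _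

theorem hankelApply_sub : hankelApply γ k (P - Q) = hankelApply γ k P - hankelApply γ k Q :=
  eq_sub_of_add_eq (by rw [← hankelApply_add, sub_add_cancel])

theorem hankelApply_C_mul (b : F) : hankelApply γ k (C b * P) = b * hankelApply γ k P := by
  rw [hankelApply_eq_sum_range (natDegree_C_mul_le b P |>.trans_lt (Nat.lt_succ_self _)),
    hankelApply_eq_sum_range (Nat.lt_succ_self _), Finset.mul_sum]
  exact Finset.sum_congr rfl fun j _ => by rw [coeff_C_mul]; ring

theorem hankelApply_X_pow_mul (t : ℕ) : hankelApply γ k (X ^ t * P) = hankelApply γ (k + t) P := by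
  have hdeg : (X ^ t * P).natDegree < t + (P.natDegree + 1) :=
    (natDegree_mul_le.trans (by rw [natDegree_X_pow])).trans_lt (by omega)
  rw [hankelApply_eq_sum_range hdeg, hankelApply_eq_sum_range (Nat.lt_succ_self _),
    Finset.sum_range_add, Finset.sum_eq_zero fun j hj => by
      rw [coeff_X_pow_mul', if_neg (by simp at hj; omega), mul_zero], zero_add]
  refine Finset.sum_congr rfl fun j _ => ?_
  rw [add_comm t j, coeff_X_pow_mul, add_assoc, add_comm t j]

theorem hankelApply_mul :
    hankelApply γ k (B * Q) = B.sum fun t b => b * hankelApply γ (k + t) Q := by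
  induction B using Polynomial.induction_on' with
  | add p q hp hq =>
    rw [add_mul, hankelApply_add, hp, hq, sum_add_index p q (fun t b => b * hankelApply γ (k + t) Q)
      (fun _ => zero_mul _) fun _ _ _ => add_mul _ _ _]
  | monomial t b =>
    rw [sum_monomial_index b _ (zero_mul _), ← C_mul_X_pow_eq_monomial, mul_assoc,
      hankelApply_C_mul, hankelApply_X_pow_mul]

theorem hankelApply_mul_eq_zero {d : ℤ} (hB : degLE F B d)
    (hQ : ∀ t : ℕ, (t : ℤ) ≤ d → hankelApply γ (k + t) Q = 0) : hankelApply γ k (B * Q) = 0 := by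
  rw [hankelApply_mul, sum_def]
  refine Finset.sum_eq_zero fun t ht => ?_
  rw [hQ t (not_lt.1 fun h => mem_support_iff.1 ht (hB t h)), mul_zero]

theorem hankelApply_mul_eq_coeff_mul {d : ℕ} (hB : degLE F B d)
    (hQ : ∀ t < d, hankelApply γ (k + t) Q = 0) :
    hankelApply γ k (B * Q) = B.coeff d * hankelApply γ (k + d) Q := by
  rw [hankelApply_mul, sum_def]
  refine Finset.sum_eq_single d (fun t ht htd => ?_) fun hd => ?_
  · have : t ≤ d := by exact_mod_cast not_lt.1 fun h => mem_support_iff.1 ht (hB t h)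
    rw [hQ t (by omega), mul_zero]
  · rw [notMem_support_iff.1 hd, zero_mul]

theorem hankelApply_congr {γ' : ℕ → F} (h : ∀ j, P.coeff j ≠ 0 → γ (k + j) = γ' (k + j)) :
    hankelApply γ k P = hankelApply γ' k P :=
  Finset.sum_congr rfl fun j hj => congrArg (· * P.coeff j) (h j (mem_support_iff.1 hj))

theorem hankel_mulVec_coeff {l m : ℕ} (hP : degLE F P (m - 1)) :
    hankel F l m γ *ᵥ (fun j : Fin m => P.coeff j) = fun i : Fin l => hankelApply γ i P := by
  funext i
  rw [hankelApply, sum_def, Finset.sum_subset (s₂ := Finset.range m) (fun j hj => ?_)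
    fun j _ hj => by rw [notMem_support_iff.1 hj, mul_zero]]
  · exact Fin.sum_univ_eq_sum_range (fun j => γ (i + j) * P.coeff j) m
  · exact Finset.mem_range.2 (not_le.1 fun h => mem_support_iff.1 hj (hP j (by omega)))

theorem hankel_mulVec_coeff_eq_zero_iff {l m : ℕ} (hP : degLE F P (m - 1)) :
    hankel F l m γ *ᵥ (fun j : Fin m => P.coeff j) = 0 ↔ ∀ i < l, hankelApply γ i P = 0 := by
  rw [hankel_mulVec_coeff hP, funext_iff]
  exact ⟨fun h i hi => h ⟨i, hi⟩, fun h i => h i i.2⟩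

end HankelApply

section CharSeq

variable {F : Type} [Field F] {n r : ℕ} {α : ℕ → F} {A₁ A₂ : F[X]}

theorem degLE_add_mul {m : ℤ} {B₁ B₂ : F[X]} (hA₁ : degLE F A₁ r)
    (hA₂ : degLE F A₂ ((n : ℤ) + 2 - r)) (hB₁ : degLE F B₁ (m - r - 1))
    (hB₂ : degLE F B₂ (m - ((n : ℤ) + 2 - r) - 1)) : degLE F (B₁ * A₁ + B₂ * A₂) (m - 1) :=
  ((hB₁.mul hA₁).mono (by omega)).add ((hB₂.mul hA₂).mono (by omega))

theorem isCharSeq_iff (hA₁ : degLE F A₁ r) (hA₂ : degLE F A₂ ((n : ℤ) + 2 - r)) :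
    IsCharSeq F n r A₁ A₂ α ↔ ∀ l m : ℕ, 1 ≤ l → 1 ≤ m → l + m = n + 2 → ∀ P : F[X],
      degLE F P (m - 1) → ((∀ i < l, hankelApply α i P = 0) ↔ ∃ B₁ B₂ : F[X],
        degLE F B₁ ((m : ℤ) - r - 1) ∧ degLE F B₂ ((m : ℤ) - ((n : ℤ) + 2 - r) - 1) ∧
          P = B₁ * A₁ + B₂ * A₂) := by
  have key : ∀ l m : ℕ, ∀ P : F[X], degLE F P (m - 1) →
      ((fun j : Fin m => P.coeff j) ∈ {v : Fin m → F | hankel F l m α *ᵥ v = 0} ↔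
        ∀ i < l, hankelApply α i P = 0) ∧
      ((fun j : Fin m => P.coeff j) ∈ {v : Fin m → F | ∃ B₁ B₂ : F[X],
        degLE F B₁ ((m : ℤ) - r - 1) ∧ degLE F B₂ ((m : ℤ) - ((n : ℤ) + 2 - r) - 1) ∧
          v = fun i : Fin m => (B₁ * A₁ + B₂ * A₂).coeff i} ↔ ∃ B₁ B₂ : F[X],
        degLE F B₁ ((m : ℤ) - r - 1) ∧ degLE F B₂ ((m : ℤ) - ((n : ℤ) + 2 - r) - 1) ∧
          P = B₁ * A₁ + B₂ * A₂) := fun l m P hP =>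
    ⟨hankel_mulVec_coeff_eq_zero_iff hP, exists₂_congr fun _ _ => and_congr_right fun hB₁ =>
      and_congr_right fun hB₂ => coeff_fin_eq_iff hP (degLE_add_mul hA₁ hA₂ hB₁ hB₂)⟩
  refine ⟨fun hchar l m hl hm hlm P hP => ?_, fun h l m hl hm hlm => Set.ext fun v => ?_⟩
  · rw [← (key l m P hP).1, ← (key l m P hP).2, hchar l m hl hm hlm]
  · obtain ⟨P, hP, rfl⟩ := exists_degLE_coeff_fin_eq v
    rw [(key l m P hP).1, (key l m P hP).2]
    exact h l m hl hm hlm P hP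

theorem hankelApply_add_mul_eq_zero {γ : ℕ → F} (h₁ : ∀ k, k + r ≤ n → hankelApply γ k A₁ = 0)
    (h₂ : ∀ k, k + 2 ≤ r → hankelApply γ k A₂ = 0) {l m : ℕ} (hlm : l + m = n + 2)
    {B₁ B₂ : F[X]} (hB₁ : degLE F B₁ ((m : ℤ) - r - 1))
    (hB₂ : degLE F B₂ ((m : ℤ) - ((n : ℤ) + 2 - r) - 1)) {i : ℕ} (hi : i < l) :
    hankelApply γ i (B₁ * A₁ + B₂ * A₂) = 0 := by
  rw [hankelApply_add, hankelApply_mul_eq_zero hB₁ fun t ht => h₁ _ (by omega),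
    hankelApply_mul_eq_zero hB₂ fun t ht => h₂ _ (by omega), add_zero]

theorem IsCharSeq.hankelApply_eq_zero (hchar : IsCharSeq F n r A₁ A₂ α) (hA₁ : degLE F A₁ r)
    (hA₂ : degLE F A₂ ((n : ℤ) + 2 - r)) {l m : ℕ} (hl : 1 ≤ l) (hm : 1 ≤ m) (hlm : l + m = n + 2)
    {B₁ B₂ : F[X]} (hB₁ : degLE F B₁ ((m : ℤ) - r - 1))
    (hB₂ : degLE F B₂ ((m : ℤ) - ((n : ℤ) + 2 - r) - 1)) {i : ℕ} (hi : i < l) :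
    hankelApply α i (B₁ * A₁ + B₂ * A₂) = 0 :=
  ((isCharSeq_iff hA₁ hA₂).1 hchar l m hl hm hlm _ (degLE_add_mul hA₁ hA₂ hB₁ hB₂)).2
    ⟨B₁, B₂, hB₁, hB₂, rfl⟩ i hi

theorem IsCharSeq.hankelApply_first_eq_zero (hchar : IsCharSeq F n r A₁ A₂ α)
    (hA₁ : degLE F A₁ r) (hA₂ : degLE F A₂ ((n : ℤ) + 2 - r)) {k : ℕ} (hk : k + r ≤ n) :
    hankelApply α k A₁ = 0 := by
  simpa using hchar.hankelApply_eq_zero hA₁ hA₂ (l := n + 1 - r) (m := r + 1) (by omega)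
    (by omega) (by omega) (B₁ := 1) (B₂ := 0) (by simpa using degLE_C (1 : F))
    (fun _ _ => rfl) (i := k) (by omega)

theorem IsCharSeq.hankelApply_second_eq_zero (hchar : IsCharSeq F n r A₁ A₂ α)
    (hA₁ : degLE F A₁ r) (hA₂ : degLE F A₂ ((n : ℤ) + 2 - r)) (hr : r ≤ n + 2) {k : ℕ}
    (hk : k + 2 ≤ r) : hankelApply α k A₂ = 0 := by
  simpa using hchar.hankelApply_eq_zero hA₁ hA₂ (l := r - 1) (m := n + 3 - r) (by omega)
    (by omega) (by omega) (B₁ := 0) (B₂ := 1) (fun _ _ => rfl)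
    ((degLE_C (1 : F)).mono (by omega)) (i := k) (by omega)

theorem IsCharSeq.hankelApply_first_ne_zero (hchar : IsCharSeq F n r A₁ A₂ α)
    (hA₁ : degLE F A₁ ((r : ℤ) - 1)) (hA₂ : degLE F A₂ ((n : ℤ) + 2 - r)) (hA₁0 : A₁ ≠ 0)
    (hr : 2 * r ≤ n + 2) : hankelApply α (n + 1 - r) A₁ ≠ 0 := by
  intro hS
  have hr1 : 1 ≤ r := by
    by_contra h
    exact hA₁0 (hA₁.eq_zero (by omega))
  set e := n + 2 - 2 * r
  have hvan : ∀ i < r, hankelApply α i (X ^ e * A₁) = 0 := fun i hi => by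
    rw [hankelApply_X_pow_mul]
    rcases lt_or_ge (i + 1) r with hi' | hi'
    · exact hchar.hankelApply_first_eq_zero (hA₁.mono (by omega)) hA₂ (by omega)
    · rwa [show i + e = n + 1 - r by omega]
  have hdeg : degLE F (X ^ e * A₁) (((n + 2 - r : ℕ) : ℤ) - 1) :=
    ((degLE_X_pow e).mul hA₁).mono (by omega)
  obtain ⟨B₁, B₂, hB₁, hB₂, hP⟩ := ((isCharSeq_iff (hA₁.mono (by omega)) hA₂).1 hchar r
    (n + 2 - r) hr1 (by omega) (by omega) _ hdeg).1 hvan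
  rw [hB₂.eq_zero (by omega), zero_mul, add_zero] at hP
  have hX : X ^ e = B₁ := mul_right_cancel₀ hA₁0 hP
  have := congrArg (coeff · e) hX
  simp only [coeff_X_pow_self, hB₁ e (by omega)] at this
  exact one_ne_zero this

theorem IsCharSeq.rank_hankel (hchar : IsCharSeq F n r A₁ A₂ α) (hA₁ : degLE F A₁ r)
    (hA₂ : degLE F A₂ ((n : ℤ) + 2 - r)) (hA₁0 : A₁ ≠ 0) {l m : ℕ} (hl : 1 ≤ l) (hm : 1 ≤ m)
    (hlm : l + m = n + 2) (hrm : r ≤ m) (hmr : m + r ≤ n + 2) : (hankel F l m α).rank = r := by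
  let φ : degreeLT F (m - r) →ₗ[F] (Fin m → F) :=
    (LinearMap.pi fun j : Fin m => (lcoeff F j).comp (LinearMap.mulRight F A₁)).comp
      (degreeLT F (m - r)).subtype
  have hdeg : ∀ B : degreeLT F (m - r), degLE F ((B : F[X]) * A₁) (m - 1) := fun B =>
    ((mem_degreeLT_iff_degLE.1 B.2).mul hA₁).mono (by omega)
  have hker : LinearMap.ker (hankel F l m α).mulVecLin = LinearMap.range φ := by
    ext v
    obtain ⟨P, hP, rfl⟩ := exists_degLE_coeff_fin_eq v
    rw [LinearMap.mem_ker, Matrix.mulVecLin_apply, hankel_mulVec_coeff_eq_zero_iff hP,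
      (isCharSeq_iff hA₁ hA₂).1 hchar l m hl hm hlm P hP, LinearMap.mem_range]
    constructor
    · rintro ⟨B₁, B₂, hB₁, hB₂, rfl⟩
      rw [hB₂.eq_zero (by omega), zero_mul, add_zero]
      exact ⟨⟨B₁, mem_degreeLT_iff_degLE.2 (hB₁.mono (by omega))⟩, rfl⟩
    · rintro ⟨B, hB⟩
      refine ⟨B, 0, (mem_degreeLT_iff_degLE.1 B.2).mono (by omega), fun _ _ => coeff_zero _, ?_⟩
      rw [zero_mul, add_zero]
      exact ((coeff_fin_eq_iff (hdeg B) hP).1 hB).symm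
  have hinj : Function.Injective φ := by
    rw [← LinearMap.ker_eq_bot, Submodule.eq_bot_iff]
    intro B hB
    have hB0 : (B : F[X]) * A₁ = 0 :=
      (coeff_fin_eq_iff (m := m) (hdeg B) fun _ _ => coeff_zero _).1
        (funext fun j => (congrFun hB j).trans (coeff_zero _).symm)
    exact Subtype.ext ((mul_eq_zero.1 hB0).resolve_right hA₁0)
  have hsum := LinearMap.finrank_range_add_finrank_ker (hankel F l m α).mulVecLin
  rw [hker, LinearMap.finrank_range_of_inj hinj, (degreeLTEquiv F (m - r)).finrank_eq,
    Module.finrank_fin_fun, Module.finrank_fin_fun] at hsum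
  rw [Matrix.rank]
  omega

theorem IsCharSeq.det_hankel_eq_zero (hchar : IsCharSeq F n r A₁ A₂ α) (hA₁ : degLE F A₁ r)
    (hA₂ : degLE F A₂ ((n : ℤ) + 2 - r)) (hA₁0 : A₁ ≠ 0) {l : ℕ} (hrl : r < l)
    (hll : l + l = n + 2) : (hankel F l l α).det = 0 := by
  refine Matrix.exists_mulVec_eq_zero_iff.1 ⟨fun j : Fin l => A₁.coeff j, fun h => ?_, ?_⟩
  · have hd := hA₁.natDegree_le
    exact hA₁0 (leadingCoeff_eq_zero.1 (congrFun h ⟨A₁.natDegree, by omega⟩))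
  · exact (hankel_mulVec_coeff_eq_zero_iff (hA₁.mono (by omega))).2 fun i hi =>
      hchar.hankelApply_first_eq_zero hA₁ hA₂ (by omega)

end CharSeq

section Extension

variable {F : Type} [Field F] {n : ℕ} {α : ℕ → F}

theorem extendSeq_of_ne (c : F) {i : ℕ} (hi : i ≠ n + 1) : extendSeq F n α c i = α i :=
  if_neg hi

theorem hankel_extendSeq (c : F) {l m : ℕ} (hlm : l + m ≤ n + 2) :
    hankel F l m (extendSeq F n α c) = hankel F l m α :=
  Matrix.ext fun i j => extendSeq_of_ne c (by omega)

theorem hankelApply_extendSeq (c : F) {P : F[X]} {k : ℕ} {d : ℤ} (hP : degLE F P d)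
    (hk : k + d ≤ n) : hankelApply (extendSeq F n α c) k P = hankelApply α k P :=
  hankelApply_congr fun j hj => extendSeq_of_ne c fun h => hj (hP j (by omega))

theorem hankelApply_extendSeq_eq_add (c : F) (P : F[X]) {k : ℕ} (hk : k ≤ n + 1) :
    hankelApply (extendSeq F n α c) k P =
      hankelApply (extendSeq F n α 0) k P + c * P.coeff (n + 1 - k) := by
  rw [hankelApply_eq_sum_range (N := P.natDegree + n + 2) (by omega),
    hankelApply_eq_sum_range (N := P.natDegree + n + 2) (by omega),
    ← sub_eq_iff_eq_add', ← Finset.sum_sub_distrib, Finset.sum_eq_single (n + 1 - k)]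
  · simp [extendSeq, show k + (n + 1 - k) = n + 1 by omega]
  · intro j _ hj
    rw [extendSeq_of_ne c (by omega), extendSeq_of_ne 0 (by omega), sub_self]
  · intro h
    exact absurd (Finset.mem_range.2 (by omega)) h

theorem rhoC_extendSeq (c : F) (hdet : ∀ l, (n + 2) / 2 < l → l ≤ (n + 3) / 2 →
    (hankel F l l (extendSeq F n α c)).det = 0) :
    rhoC F (n + 1) (extendSeq F n α c) = rhoC F n α := by
  unfold rhoC
  congr 1
  ext l
  refine ⟨fun ⟨hl, hd⟩ => ?_, fun ⟨hl, hd⟩ => ⟨by omega, by rwa [hankel_extendSeq c (by omega)]⟩⟩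
  by_cases hl' : l ≤ (n + 2) / 2
  · exact ⟨hl', by rwa [hankel_extendSeq c (by omega)] at hd⟩
  · exact absurd (hdet l (by omega) (by omega)) hd

theorem exists_bijective_hankelApply_extendSeq (α : ℕ → F) {P : F[X]} {k : ℕ} (hk : k ≤ n + 1)
    (ha : P.coeff (n + 1 - k) ≠ 0) {S : F} (hS : S ≠ 0) :
    ∃ b : F → F, Function.Bijective b ∧ ∀ c, hankelApply (extendSeq F n α c) k P = -(b c * S) := by
  set T := hankelApply (extendSeq F n α 0) k P
  refine ⟨fun c => -(T + c * P.coeff (n + 1 - k)) / S,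
    Function.bijective_iff_has_inverse.2 ⟨fun β => (-(β * S) - T) / P.coeff (n + 1 - k),
      fun c => ?_, fun β => ?_⟩, fun c => ?_⟩
  · field_simp
    ring
  · field_simp
    ring
  · rw [hankelApply_extendSeq_eq_add c P hk]
    field_simp
    ring

end Extension

section CharSeqExtension

variable {F : Type} [Field F] {n r : ℕ} {α : ℕ → F} {A₁ A₂ : F[X]} {c β : F}

theorem IsCharSeq.hankelApply_extendSeq_first_eq_zero (hchar : IsCharSeq F n r A₁ A₂ α)
    (hA₁ : degLE F A₁ r) (hA₂ : degLE F A₂ ((n : ℤ) + 2 - r)) (c : F) {k : ℕ} (hk : k + r ≤ n) :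
    hankelApply (extendSeq F n α c) k A₁ = 0 := by
  rw [hankelApply_extendSeq c hA₁ (by omega)]
  exact hchar.hankelApply_first_eq_zero hA₁ hA₂ hk

theorem IsCharSeq.hankelApply_extendSeq_second_eq_zero (hchar : IsCharSeq F n r A₁ A₂ α)
    (hA₁ : degLE F A₁ ((r : ℤ) - 1)) (hA₂ : degLE F A₂ ((n : ℤ) + 2 - r)) (hr : 2 * r ≤ n + 2)
    (hβ : hankelApply (extendSeq F n α c) (r - 1) A₂ = -(β * hankelApply α (n + 1 - r) A₁))
    {k : ℕ} (hk : k + 1 ≤ r) :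
    hankelApply (extendSeq F n α c) k (C β * X ^ (n + 2 - 2 * r) * A₁ + A₂) = 0 := by
  rw [hankelApply_add, mul_assoc, hankelApply_C_mul, hankelApply_X_pow_mul]
  rcases lt_or_ge (k + 1) r with hk' | hk'
  · rw [hchar.hankelApply_extendSeq_first_eq_zero (hA₁.mono (by omega)) hA₂ c (by omega),
      hankelApply_extendSeq c hA₂ (by omega),
      hchar.hankelApply_second_eq_zero (hA₁.mono (by omega)) hA₂ (by omega) (by omega)]
    ring
  · obtain rfl : k = r - 1 := by omega
    rw [hβ, show r - 1 + (n + 2 - 2 * r) = n + 1 - r by omega,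
      hankelApply_extendSeq c hA₁ (by omega)]
    ring

theorem degLE_C_mul_X_pow_mul_add (hA₁ : degLE F A₁ ((r : ℤ) - 1))
    (hA₂ : degLE F A₂ ((n : ℤ) + 2 - r)) (hr : 2 * r ≤ n + 2) (β : F) :
    degLE F (C β * X ^ (n + 2 - 2 * r) * A₁ + A₂) ((n : ℤ) + 2 - r) :=
  ((((degLE_C β).mul (degLE_X_pow _)).mul hA₁).mono (by omega)).add hA₂

theorem IsCharSeq.exists_eq_of_extendSeq_of_two_le (hchar : IsCharSeq F n r A₁ A₂ α)
    (hA₁ : degLE F A₁ ((r : ℤ) - 1)) (hA₂ : degLE F A₂ ((n : ℤ) + 2 - r)) (hr : 2 * r ≤ n + 2)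
    (hS : hankelApply α (n + 1 - r) A₁ ≠ 0)
    (hβ : hankelApply (extendSeq F n α c) (r - 1) A₂ = -(β * hankelApply α (n + 1 - r) A₁))
    {l m : ℕ} (hl : 2 ≤ l) (hm : 1 ≤ m) (hlm : l + m = n + 3) {P : F[X]} (hP : degLE F P (m - 1))
    (h : ∀ i < l, hankelApply (extendSeq F n α c) i P = 0) :
    ∃ B₁ B₂ : F[X], degLE F B₁ ((m : ℤ) - r - 2) ∧
      degLE F B₂ ((m : ℤ) - ((n : ℤ) + 2 - r) - 1) ∧
        P = B₁ * A₁ + B₂ * (C β * X ^ (n + 2 - 2 * r) * A₁ + A₂) := by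
  -- The first `l - 1` rows do not reach the new entry, so `P` is a combination for `α`; in the
  -- last row only the top coefficient of `B₁ - β X ^ (n + 2 - 2r) B₂` meets a nonzero pairing.
  obtain ⟨B₁, B₂, hB₁, hB₂, rfl⟩ := ((isCharSeq_iff (hA₁.mono (by omega)) hA₂).1 hchar (l - 1) m
    (by omega) (by omega) (by omega) P hP).1
      fun i hi => (hankelApply_extendSeq c hP (by omega)).symm.trans (h i (by omega))
  set B₁' := B₁ - C β * X ^ (n + 2 - 2 * r) * B₂
  have hB₁' : degLE F B₁' ((m : ℤ) - r - 1) :=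
    hB₁.sub ((((degLE_C β).mul (degLE_X_pow _)).mul hB₂).mono (by omega))
  refine ⟨B₁', B₂, ?_, hB₂, by ring⟩
  rcases lt_or_ge m (r + 1) with hmr | hmr
  · rw [hB₁'.eq_zero (by omega)]
    exact fun _ _ => coeff_zero _
  have hrow := h (l - 1) (by omega)
  rw [show B₁ * A₁ + B₂ * A₂ = B₁' * A₁ + B₂ * (C β * X ^ (n + 2 - 2 * r) * A₁ + A₂) by ring,
    hankelApply_add, hankelApply_mul_eq_zero hB₂ fun t ht =>
      hchar.hankelApply_extendSeq_second_eq_zero hA₁ hA₂ hr hβ (by omega), add_zero,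
    hankelApply_mul_eq_coeff_mul (d := m - r - 1) (hB₁'.mono (by omega)) fun t ht =>
      hchar.hankelApply_extendSeq_first_eq_zero (hA₁.mono (by omega)) hA₂ c (by omega),
    show l - 1 + (m - r - 1) = n + 1 - r by omega, hankelApply_extendSeq c hA₁ (by omega)] at hrow
  refine (hB₁'.of_coeff_eq_zero fun i hi => ?_).mono (by omega)
  rw [show i = m - r - 1 by omega]
  exact (mul_eq_zero.1 hrow).resolve_right hS

theorem IsCharSeq.exists_eq_of_extendSeq_of_one (hchar : IsCharSeq F n r A₁ A₂ α)
    (hA₁ : degLE F A₁ ((r : ℤ) - 1)) (hA₂ : degLE F A₂ ((n : ℤ) + 2 - r)) (hr : 2 * r ≤ n)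
    (hr1 : 1 ≤ r) (ha : A₂.coeff (n + 2 - r) ≠ 0)
    (hβ : hankelApply (extendSeq F n α c) (r - 1) A₂ = -(β * hankelApply α (n + 1 - r) A₁))
    {P : F[X]} (hP : degLE F P ((n : ℤ) + 1)) (h : hankelApply (extendSeq F n α c) 0 P = 0) :
    ∃ B₁ B₂ : F[X], degLE F B₁ ((n : ℤ) - r) ∧ degLE F B₂ ((r : ℤ) - 1) ∧
      P = B₁ * A₁ + B₂ * (C β * X ^ (n + 2 - 2 * r) * A₁ + A₂) := by
  set A₂' := C β * X ^ (n + 2 - 2 * r) * A₁ + A₂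
  have hA₂' : degLE F A₂' ((n : ℤ) + 2 - r) := degLE_C_mul_X_pow_mul_add hA₁ hA₂ (by omega) β
  -- `X ^ (r - 1) * A₂'` lies in the kernel and has nonzero top coefficient; subtracting a
  -- multiple of it brings `P` down to degree `n`, where the kernel of `α` is known.
  set κ := P.coeff (n + 1) / A₂.coeff (n + 2 - r)
  have hQ : hankelApply (extendSeq F n α c) 0 (X ^ (r - 1) * A₂') = 0 := by
    rw [hankelApply_X_pow_mul, zero_add]
    exact hchar.hankelApply_extendSeq_second_eq_zero hA₁ hA₂ (by omega) hβ (by omega)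
  have hQtop : (X ^ (r - 1) * A₂').coeff (n + 1) = A₂.coeff (n + 2 - r) := by
    rw [coeff_X_pow_mul', if_pos (by omega), show n + 1 - (r - 1) = n + 2 - r by omega,
      coeff_add, (((degLE_C β).mul (degLE_X_pow _)).mul hA₁) _ (by omega), zero_add]
  have hP' : degLE F (P - C κ * (X ^ (r - 1) * A₂')) (((n + 1 : ℕ) : ℤ) - 1) := by
    have hκQ : degLE F (C κ * (X ^ (r - 1) * A₂')) ((n : ℤ) + 1) :=
      ((degLE_C κ).mul ((degLE_X_pow _).mul hA₂')).mono (by omega)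
    refine ((hP.sub hκQ).of_coeff_eq_zero fun i hi => ?_).mono ?_
    · rw [show i = n + 1 by omega, coeff_sub, coeff_C_mul, hQtop, div_mul_cancel₀ _ ha, sub_self]
    · push_cast
      omega
  obtain ⟨D₁, D₂, hD₁, hD₂, hD⟩ := ((isCharSeq_iff (hA₁.mono (by omega)) hA₂).1 hchar 1 (n + 1)
    le_rfl (by omega) (by omega) _ hP').1 fun i hi => by
      obtain rfl : i = 0 := by omega
      rw [← hankelApply_extendSeq (n := n) (α := α) (k := 0) c hP' (by push_cast; omega),
        hankelApply_sub, hankelApply_C_mul, h, hQ, mul_zero, sub_zero]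
  refine ⟨D₁ - C β * X ^ (n + 2 - 2 * r) * D₂, D₂ + C κ * X ^ (r - 1), ?_, ?_, ?_⟩
  · exact (hD₁.mono (by omega)).sub ((((degLE_C β).mul (degLE_X_pow _)).mul hD₂).mono (by omega))
  · exact (hD₂.mono (by omega)).add (((degLE_C κ).mul (degLE_X_pow _)).mono (by omega))
  · linear_combination hD

theorem IsCharSeq.extendSeq (hchar : IsCharSeq F n r A₁ A₂ α)
    (hA₁ : degLE F A₁ ((r : ℤ) - 1)) (hA₂ : degLE F A₂ ((n : ℤ) + 2 - r)) (hr : 2 * r ≤ n)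
    (hS : hankelApply α (n + 1 - r) A₁ ≠ 0) (ha : A₂.coeff (n + 2 - r) ≠ 0)
    (hβ : hankelApply (extendSeq F n α c) (r - 1) A₂ = -(β * hankelApply α (n + 1 - r) A₁)) :
    IsCharSeq F (n + 1) (r + 1) A₁ (C β * X ^ (n + 2 - 2 * r) * A₁ + A₂) (extendSeq F n α c) := by
  have hr1 : 1 ≤ r := by
    by_contra h
    exact hS (by rw [hA₁.eq_zero (by omega)]; exact sum_zero_index _)
  rw [isCharSeq_iff (hA₁.mono (by omega))
    ((degLE_C_mul_X_pow_mul_add hA₁ hA₂ (by omega) β).mono (by push_cast; omega))]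
  intro l m hl hm hlm P hP
  constructor
  · intro h
    obtain ⟨B₁, B₂, hB₁, hB₂, hBP⟩ : ∃ B₁ B₂ : F[X], degLE F B₁ ((m : ℤ) - r - 2) ∧
        degLE F B₂ ((m : ℤ) - ((n : ℤ) + 2 - r) - 1) ∧
          P = B₁ * A₁ + B₂ * (C β * X ^ (n + 2 - 2 * r) * A₁ + A₂) := by
      rcases lt_or_ge l 2 with hl1 | hl2
      · obtain ⟨rfl, rfl⟩ : l = 1 ∧ m = n + 2 := by omega
        obtain ⟨B₁, B₂, hB₁, hB₂, hBP⟩ := hchar.exists_eq_of_extendSeq_of_one hA₁ hA₂ hr hr1 ha hβ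
          (hP.mono (by push_cast; omega)) (h 0 Nat.one_pos)
        exact ⟨B₁, B₂, hB₁.mono (by push_cast; omega), hB₂.mono (by push_cast; omega), hBP⟩
      · exact hchar.exists_eq_of_extendSeq_of_two_le hA₁ hA₂ (by omega) hS hβ hl2 hm
          (by omega) hP h
    exact ⟨B₁, B₂, hB₁.mono (by push_cast; omega), hB₂.mono (by push_cast; omega), hBP⟩
  · rintro ⟨B₁, B₂, hB₁, hB₂, rfl⟩ i hi
    exact hankelApply_add_mul_eq_zero
      (fun k hk => hchar.hankelApply_extendSeq_first_eq_zero (hA₁.mono (by omega)) hA₂ c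
        (by omega))
      (fun k hk => hchar.hankelApply_extendSeq_second_eq_zero hA₁ hA₂ (by omega) hβ (by omega))
      hlm hB₁ hB₂ hi

end CharSeqExtension

theorem stmt_18_general (F : Type) [Field F] (n r ρ₁ π₁ : ℕ) (α : ℕ → F)
    (A₁ A₂ : Polynomial F)
    (hπ₁ : 1 ≤ π₁) (hrsum : r = ρ₁ + π₁) (hr : r + 1 ≤ (n + 2) / 2)
    (hρ : rhoC F n α = ρ₁)
    (hd1 : A₁.degree = (ρ₁ : WithBot ℕ))
    (hd2 : A₂.degree = ((n + 2 - r : ℕ) : WithBot ℕ))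
    (hchar : IsCharSeq F n r A₁ A₂ α) :
    ∃ b : F → F, Function.Bijective b ∧ ∀ c : F,
      rhoC F (n + 1) (extendSeq F n α c) = ρ₁ ∧
      piC F (n + 1) (extendSeq F n α c) = π₁ + 1 ∧
      (hankel F ((n + 3) / 2) ((n + 4) / 2) (extendSeq F n α c)).rank = r + 1 ∧
      IsCharSeq F (n + 1) (r + 1) A₁
        (Polynomial.C (b c) * Polynomial.X ^ (n + 2 - 2 * r) * A₁ + A₂)
        (extendSeq F n α c) := by
  have hA₁0 : A₁ ≠ 0 := ne_zero_of_degree_gt (n := ⊥) (by rw [hd1]; exact WithBot.bot_lt_coe _)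
  have hA₂0 : A₂ ≠ 0 := ne_zero_of_degree_gt (n := ⊥) (by rw [hd2]; exact WithBot.bot_lt_coe _)
  rw [degree_eq_natDegree hA₁0, Nat.cast_inj] at hd1
  rw [degree_eq_natDegree hA₂0, Nat.cast_inj] at hd2
  have hA₁ : degLE F A₁ ((r : ℤ) - 1) := (degLE_natDegree A₁).mono (by omega)
  have hA₂ : degLE F A₂ ((n : ℤ) + 2 - r) := (degLE_natDegree A₂).mono (by omega)
  have ha : A₂.coeff (n + 1 - (r - 1)) ≠ 0 := by
    rw [show n + 1 - (r - 1) = A₂.natDegree by omega]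
    exact leadingCoeff_ne_zero.2 hA₂0
  have hS := hchar.hankelApply_first_ne_zero hA₁ hA₂ hA₁0 (by omega)
  obtain ⟨b, hb, hbc⟩ := exists_bijective_hankelApply_extendSeq α (by omega) ha hS
  refine ⟨b, hb, fun c => ?_⟩
  have hchar' := hchar.extendSeq hA₁ hA₂ (by omega) hS
    (by rwa [show n + 2 - r = n + 1 - (r - 1) by omega]) (hbc c)
  have hA₁' : degLE F A₁ ((r + 1 : ℕ) : ℤ) := hA₁.mono (by omega)
  have hA₂' := (degLE_C_mul_X_pow_mul_add hA₁ hA₂ (by omega) (b c)).mono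
    (k' := ((n + 1 : ℕ) : ℤ) + 2 - (r + 1 : ℕ)) (by push_cast; omega)
  have hrank := hchar'.rank_hankel hA₁' hA₂' hA₁0 (l := (n + 3) / 2) (m := (n + 4) / 2)
    (by omega) (by omega) (by omega) (by omega) (by omega)
  have hρ' : rhoC F (n + 1) (extendSeq F n α c) = ρ₁ := hρ ▸ rhoC_extendSeq c fun l hl hl' =>
    hchar'.det_hankel_eq_zero hA₁' hA₂' hA₁0 (by omega) (by omega)
  refine ⟨hρ', ?_, hrank, hchar'⟩
  rw [piC, show (n + 1 + 2) / 2 = (n + 3) / 2 by omega, show (n + 1 + 3) / 2 = (n + 4) / 2 by omega,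
    hrank, hρ']
  omega

/-- extending a non-quasi-regular sequence `α ∈ L_n(r,ρ₁,π₁)` (`π₁ ≥ 1`)
by one entry `α_{n+1} = c`. For every `c`, `ρ(α') = ρ₁`, `π(α') = π₁ + 1` and the rank
becomes `r+1`; the characteristic polynomials become `A₁' = A₁` and
`A₂' = β T^{c₂-c₁} A₁ + A₂` where `β = b c` and `b : F → F` is a bijection
(the correspondence `α_{n+1} ↔ β`). -/
theorem stmt_18 (F : Type) [Field F] [Fintype F] (n r ρ₁ π₁ : ℕ) (α : ℕ → F)
    (A₁ A₂ : Polynomial F)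
    (hπ₁ : 1 ≤ π₁) (hrsum : r = ρ₁ + π₁) (hr : r + 1 ≤ (n + 2) / 2)
    (hrank : (hankel F ((n + 2) / 2) ((n + 3) / 2) α).rank = r)
    (hρ : rhoC F n α = ρ₁) (hπ : piC F n α = π₁)
    (hcop : IsCoprime A₁ A₂)
    (hd1 : A₁.degree = (ρ₁ : WithBot ℕ))
    (hd2 : A₂.degree = ((n + 2 - r : ℕ) : WithBot ℕ))
    (hchar : IsCharSeq F n r A₁ A₂ α) :
    ∃ b : F → F, Function.Bijective b ∧ ∀ c : F,
      rhoC F (n + 1) (extendSeq F n α c) = ρ₁ ∧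
      piC F (n + 1) (extendSeq F n α c) = π₁ + 1 ∧
      (hankel F ((n + 3) / 2) ((n + 4) / 2) (extendSeq F n α c)).rank = r + 1 ∧
      IsCharSeq F (n + 1) (r + 1) A₁
        (Polynomial.C (b c) * Polynomial.X ^ (n + 2 - 2 * r) * A₁ + A₂)
        (extendSeq F n α c) :=
  stmt_18_general F n r ρ₁ π₁ α A₁ A₂ hπ₁ hrsum hr hρ hd1 hd2 hchar
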